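/- Let H ⊆ E⁰ be hereditary (s(e) ∈ H implies r(e) ∈ H for every e ∈ E¹), and let {p_v, s_e} be a Toeplitz–Cuntz–Krieger E-family in a C*-algebra A which moreover satisfies p_v = ∑_{e ∈ s⁻¹(v)} s_e s_e* for every regular vertex v (a Cuntz–Krieger E-family). Let E∖H denote the subgraph with vertex set E⁰∖H and edge set r⁻¹(E⁰∖H). Let x : E⁰∖H → ℤ be finitely supported, with every vertex w in its support being either a regular vertex of E or an infinite emitter of E with s⁻¹(w) ∩ r⁻¹(E⁰∖H) finite and nonempty (a breaking vertex for H), and suppose x satisfies the kernel condition for the graph E∖H. Let V̂ and P̂ be the elements of M_h(A) obtained by applying the construction of V and P to the graph E∖H and the family {p_v, s_e : v ∈ E⁰∖H, e ∈ r⁻¹(E⁰∖H)}. Then P̂ − V̂V̂* = ∑_{w regular, 1≤i≤x_w} (∑_{e ∈ s⁻¹(w), r(e) ∈ H} s_e s_e*)·E_{m↑(w,i),m↑(w,i)} + ∑_{v₀ breaking vertex, 1≤i≤x_{v₀}} p^H_{v₀}·E_{m↑(v₀,i),m↑(v₀,i)}, where p^H_{v₀} := p_{v₀} − ∑_{e ∈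 s⁻¹(v₀), r(e) ∉ H} s_e s_e* is the gap projection. -/

import Mathlib

/-- The range map extended to `E¹ ⊕ E⁰` via the convention `r v = v` for vertices. -/
def rext {V E : Type*} (r : E → V) : E ⊕ V → V := Sum.elim r id

/-- The index set `S↑(x)`. -/
def SUp {V E : Type*} (s : E → V) (x : V → ℤ) : Set ((E ⊕ V) × ℤ) :=
  {q | match q.1 with
       | Sum.inl e => 1 ≤ q.2 ∧ q.2 ≤ -x (s e)
       | Sum.inr v => 1 ≤ q.2 ∧ q.2 ≤ x v}

/-- The index set `S↓(x)`. -/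
def SDn {V E : Type*} (s : E → V) (x : V → ℤ) : Set ((E ⊕ V) × ℤ) :=
  {q | match q.1 with
       | Sum.inl e => 1 ≤ q.2 ∧ q.2 ≤ x (s e)
       | Sum.inr v => 1 ≤ q.2 ∧ q.2 ≤ -x v}

/-- The element `V` of `M_h(A)` associated to a family `{p_v, s_e}` and `x`:
`V = ∑_{w, 1≤i≤x_w, s(e)=w} s_e·E_{m↑(w,i),m↓(e,i)} + ∑_{w, 1≤i≤-x_w, s(e)=w} s_e*·E_{m↑(e,i),m↓(w,i)}`,
where the first sum is indexed by the pairs `(e,i) ∈ S↓(x)` with `e ∈ E¹` (and `w = s(e)`),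
and the second by the pairs `(e,i) ∈ S↑(x)` with `e ∈ E¹` (and `w = s(e)`). -/
noncomputable def Vmat {V E A : Type*} [AddCommMonoid A] [Star A]
    (s : E → V) (x : V → ℤ) (S : E → A) {h : ℕ}
    [Fintype (SUp s x)] [Fintype (SDn s x)]
    (mup : SUp s x ≃ Fin h) (mdn : SDn s x ≃ Fin h) : Matrix (Fin h) (Fin h) A :=
  (∑ q : SDn s x, match q with
    | ⟨(Sum.inl e, i), hq⟩ =>
        Matrix.single (mup ⟨(Sum.inr (s e), i), hq⟩) (mdn ⟨(Sum.inl e, i), hq⟩) (S e)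
    | ⟨(Sum.inr _, _), _⟩ => 0)
  + (∑ q : SUp s x, match q with
    | ⟨(Sum.inl e, i), hq⟩ =>
        Matrix.single (mup ⟨(Sum.inl e, i), hq⟩) (mdn ⟨(Sum.inr (s e), i), hq⟩) (star (S e))
    | ⟨(Sum.inr _, _), _⟩ => 0)

/-- The element `P` of `M_h(A)`:
`P = ∑_{w, 1≤i≤x_w} p_w·E_{m↑(w,i),m↑(w,i)} + ∑_{w, 1≤i≤-x_w, s(e)=w} p_{r(e)}·E_{m↑(e,i),m↑(e,i)}`,
written as a single sum over `S↑(x)` using the convention `r v = v`. -/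
noncomputable def Pmat {V E A : Type*} [AddCommMonoid A]
    (r s : E → V) (x : V → ℤ) (p : V → A) {h : ℕ}
    [Fintype (SUp s x)]
    (mup : SUp s x ≃ Fin h) : Matrix (Fin h) (Fin h) A :=
  ∑ q : SUp s x, Matrix.single (mup q) (mup q) (p (rext r q.1.1))


/-! `V̂` is a sum of matrix units whose entries (`s_e` in column `m↓(e,i)`, `s_e*` in column
`m↓(s(e),i)`) multiply to zero against each other's adjoints whenever two of them share a
column, so `V̂V̂*` is diagonal: `s_e* s_e = p_{r(e)}` at `m↑(e,i)` and `∑_{s(e)=w} s_e s_e*` at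
`m↑(w,i)`. Thus `P̂ − V̂V̂*` vanishes at the edge entries and is the gap
`p_w − ∑_{s(e)=w, r(e)∉H} s_e s_e*` at the vertex entries; when `w` is regular, the Cuntz–Krieger
relation at `w` rewrites the gap as the sum over the edges from `w` into `H`. -/
namespace Matrix

variable {ι n A : Type*} [Fintype ι] [Fintype n] [DecidableEq n]

theorem sum_single_mul_star_sum_single [NonUnitalSemiring A] [StarRing A]
    (row col : ι → n) (a : ι → A)
    (ha : ∀ i j, i ≠ j → col i = col j → a i * star (a j) = 0) :
    (∑ i, single (row i) (col i) (a i)) * star (∑ i, single (row i) (col i) (a i)) =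
      ∑ i, single (row i) (row i) (a i * star (a i)) := by
  simp only [star_sum, star_eq_conjTranspose, conjTranspose_single, Finset.sum_mul_sum]
  refine Finset.sum_congr rfl fun i _ => ?_
  rw [Finset.sum_eq_single i (fun j _ hji => ?_) (by simp), single_mul_single_same]
  by_cases hcol : col i = col j
  · rw [hcol, single_mul_single_same, ha i j hji.symm hcol, single_zero]
  · exact single_mul_single_of_ne _ _ _ _ hcol _

theorem sum_single_diag_eq_sum_fiberwise [AddCommMonoid A] (row : ι → n) (b : ι → A) :
    ∑ i, single (row i) (row i) (b i) = ∑ k, single k k (∑ i : {i // row i = k}, b i) := by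
  rw [← Fintype.sum_fiberwise row]
  refine Finset.sum_congr rfl fun k _ => ?_
  rw [← singleAddMonoidHom_apply, map_sum]
  exact Finset.sum_congr rfl fun i _ => by rw [singleAddMonoidHom_apply, i.2]

end Matrix

section VmatProduct

variable {V E A : Type*} (s : E → V) (x : V → ℤ) {h : ℕ}
  (mup : SUp s x ≃ Fin h) (mdn : SDn s x ≃ Fin h)

/-- `Vmat` as a sum of matrix units indexed by `S↓(x) ⊕ S↑(x)`: the summands at vertex entries
are `0`, and their row and column are arbitrary. -/
def vmatRow : SDn s x ⊕ SUp s x → Fin h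
  | .inl ⟨(.inl e, i), hq⟩ => mup ⟨(.inr (s e), i), hq⟩
  | .inl q => mdn q
  | .inr q => mup q

def vmatCol : SDn s x ⊕ SUp s x → Fin h
  | .inl q => mdn q
  | .inr ⟨(.inl e, i), hq⟩ => mdn ⟨(.inr (s e), i), hq⟩
  | .inr q => mup q

def vmatEntry [Zero A] [Star A] (S : E → A) : SDn s x ⊕ SUp s x → A
  | .inl ⟨(.inl e, _), _⟩ => S e
  | .inr ⟨(.inl e, _), _⟩ => star (S e)
  | _ => 0

theorem Vmat_eq_sum_single [Fintype (SUp s x)] [Fintype (SDn s x)] [AddCommMonoid A] [Star A]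
    (S : E → A) :
    Vmat s x S mup mdn = ∑ i, Matrix.single (vmatRow s x mup mdn i) (vmatCol s x mup mdn i)
      (vmatEntry s x S i) := by
  rw [Fintype.sum_sum_type, Vmat]
  congr 1
  all_goals
    refine Finset.sum_congr rfl ?_
    rintro ⟨⟨e | v, i⟩, hq⟩ -
    all_goals simp [vmatRow, vmatCol, vmatEntry]

theorem finite_setOf_source_eq [Fintype (SDn s x)] {w : V} (hw : 1 ≤ x w) :
    {e | s e = w}.Finite := by
  refine Set.finite_coe_iff.mp (Finite.of_injective
    (fun e : {e // s e = w} => (⟨(.inl e.1, 1), by simpa [SDn, e.2] using hw⟩ : SDn s x)) ?_)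
  intro e f hef
  exact Subtype.ext (by simpa using hef)

variable [NonUnitalSemiring A] [StarRing A] (S : E → A)

theorem vmatEntry_mul_star_eq_zero (hS : ∀ e f, e ≠ f → star (S e) * S f = 0)
    (i j : SDn s x ⊕ SUp s x) (hij : i ≠ j) (hcol : vmatCol s x mup mdn i = vmatCol s x mup mdn j) :
    vmatEntry s x S i * star (vmatEntry s x S j) = 0 := by
  rcases i with ⟨⟨e | v, i⟩, hq⟩ | ⟨⟨e | v, i⟩, hq⟩ <;>
    rcases j with ⟨⟨f | w, j⟩, hq'⟩ | ⟨⟨f | w, j⟩, hq'⟩ <;>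
    simp only [vmatEntry, star_zero, zero_mul, mul_zero, star_star] <;>
    simp only [vmatCol, EmbeddingLike.apply_eq_iff_eq] at hcol <;>
    have hcol := congrArg Subtype.val hcol <;>
    simp at hij hcol
  case inl.inl.inl.inl => exact absurd hcol.2 (hij hcol.1)
  case inr.inl.inr.inl => exact hS e f fun hef => hij hef hcol.2

theorem sum_vmatEntry_mul_star_fiber [Fintype (SUp s x)] [Fintype (SDn s x)] (u : SUp s x) :
    ∑ i : {i // vmatRow s x mup mdn i = mup u}, vmatEntry s x S i.1 * star (vmatEntry s x S i.1) =
      match u.1.1 with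
      | .inl e => star (S e) * S e
      | .inr w => ∑ᶠ e ∈ {e | s e = w}, S e * star (S e) := by
  rcases u with ⟨⟨e | w, j⟩, hu⟩
  · rw [Fintype.sum_eq_single ⟨.inr ⟨(.inl e, j), hu⟩, rfl⟩]
    · simp [vmatEntry]
    rintro ⟨⟨⟨f | v, k⟩, hq⟩ | ⟨⟨f | v, k⟩, hq⟩, hrow⟩ hne <;>
      simp only [vmatEntry, star_zero, mul_zero] <;>
      simp only [vmatRow, EmbeddingLike.apply_eq_iff_eq] at hrow
    · simpa using congrArg Subtype.val hrow
    · exact absurd (Subtype.ext (congrArg Sum.inr hrow)) hne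
  -- the summands in the fiber of `m↑(w,j)` that can be nonzero are those at `(e,j) ∈ S↓(x)`
  -- with `s e = w`
  · have hj : 1 ≤ j ∧ j ≤ x w := hu
    have := (finite_setOf_source_eq s x (hj.1.trans hj.2)).fintype
    show _ = ∑ᶠ e ∈ {e | s e = w}, S e * star (S e)
    rw [← finsum_set_coe_eq_finsum_mem, finsum_eq_sum_of_fintype]
    symm
    refine Fintype.sum_of_injective
      (fun f => ⟨.inl ⟨(.inl f.1, j), show 1 ≤ j ∧ j ≤ x (s f) by rw [f.2]; exact hj⟩,
        congrArg mup (Subtype.ext (Prod.ext (congrArg Sum.inr (f.2 : s f = w)) rfl))⟩)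
      ?_ _ _ ?_ fun f => rfl
    · intro f g hfg
      exact Subtype.ext (by
        simpa using congrArg (fun i => Sum.elim (fun q => q.1.1) (fun q => q.1.1) i.1) hfg)
    rintro ⟨⟨⟨f | v, k⟩, hq⟩ | ⟨⟨f | v, k⟩, hq⟩, hrow⟩ hne <;>
      simp only [vmatEntry, star_zero, mul_zero] <;>
      simp only [vmatRow, EmbeddingLike.apply_eq_iff_eq] at hrow
    · obtain ⟨hf, rfl⟩ : s f = w ∧ k = j := by simpa using congrArg Subtype.val hrow
      exact absurd ⟨⟨f, hf⟩, rfl⟩ hne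
    · simpa using congrArg Subtype.val hrow

theorem Vmat_mul_star_Vmat [Fintype (SUp s x)] [Fintype (SDn s x)]
    (hS : ∀ e f, e ≠ f → star (S e) * S f = 0) :
    Vmat s x S mup mdn * star (Vmat s x S mup mdn) =
      ∑ u : SUp s x, Matrix.single (mup u) (mup u)
        (match u.1.1 with
         | .inl e => star (S e) * S e
         | .inr w => ∑ᶠ e ∈ {e | s e = w}, S e * star (S e)) := by
  rw [Vmat_eq_sum_single, Matrix.sum_single_mul_star_sum_single _ _ _
      (vmatEntry_mul_star_eq_zero s x mup mdn S hS), Matrix.sum_single_diag_eq_sum_fiberwise,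
    ← mup.sum_comp]
  exact Finset.sum_congr rfl fun u _ => by rw [sum_vmatEntry_mul_star_fiber]

end VmatProduct

theorem Pmat_sub_Vmat_mul_star_Vmat {V E A : Type*} [NonUnitalRing A] [StarRing A]
    (r s : E → V) (x : V → ℤ) (p : V → A) (S : E → A)
    (hS : ∀ e f, e ≠ f → star (S e) * S f = 0) (hSS : ∀ e, star (S e) * S e = p (r e))
    {h : ℕ} [Fintype (SUp s x)] [Fintype (SDn s x)]
    (mup : SUp s x ≃ Fin h) (mdn : SDn s x ≃ Fin h) :
    Pmat r s x p mup - Vmat s x S mup mdn * star (Vmat s x S mup mdn) =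
      ∑ u : SUp s x, Matrix.single (mup u) (mup u)
        (match u.1.1 with
         | .inl _ => 0
         | .inr w => p w - ∑ᶠ e ∈ {e | s e = w}, S e * star (S e)) := by
  rw [Vmat_mul_star_Vmat s x mup mdn S hS, Pmat, ← Finset.sum_sub_distrib]
  refine Finset.sum_congr rfl fun u _ => ?_
  rw [← Matrix.singleAddMonoidHom_apply, ← Matrix.singleAddMonoidHom_apply, ← map_sub]
  rcases u with ⟨⟨e | w, i⟩, hu⟩ <;> simp [rext, hSS]

theorem finsum_mem_source_subtype_eq {V E M : Type*} [AddCommMonoid M] {P : E → Prop}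
    {Q : V → Prop} (s : E → V) (s' : {e // P e} → {v // Q v}) (hs' : ∀ e, (s' e).1 = s e.1)
    (w : {v // Q v}) (f : E → M) :
    ∑ᶠ e ∈ {e | s' e = w}, f e.1 = ∑ᶠ e ∈ {e | s e = w.1 ∧ P e}, f e := by
  refine finsum_mem_eq_of_bijOn Subtype.val ⟨?_, Subtype.val_injective.injOn, ?_⟩ fun _ _ => rfl
  · intro e he
    exact ⟨(hs' e).symm.trans (congrArg Subtype.val he), e.2⟩
  · rintro e ⟨he, hP⟩
    exact ⟨⟨e, hP⟩, Subtype.ext ((hs' _).trans he), rfl⟩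

open scoped Classical in
theorem stmt17 {V E A : Type*} [NonUnitalCStarAlgebra A]
    (r s : E → V) (p : V → A) (S : E → A)
    (hCK1 : ∀ e, star (S e) * S e = p (r e))
    (hS_orth : ∀ e f, e ≠ f → star (S e) * S f = 0)
    (hCK2 : ∀ v, {e | s e = v}.Finite → {e | s e = v}.Nonempty →
      p v = ∑ᶠ e ∈ {e | s e = v}, S e * star (S e))
    (H : Set V)
    (r' s' : {e : E // r e ∉ H} → {v : V // v ∉ H})
    (hr' : ∀ e, (r' e).1 = r e.1) (hs' : ∀ e, (s' e).1 = s e.1)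
    (x : {v : V // v ∉ H} → ℤ)
    (hvert : ∀ w : {v : V // v ∉ H}, x w ≠ 0 →
      ({e | s e = w.1}.Finite ∧ {e | s e = w.1}.Nonempty) ∨
        ({e | s e = w.1}.Infinite ∧ {e | s e = w.1 ∧ r e ∉ H}.Finite ∧
          {e | s e = w.1 ∧ r e ∉ H}.Nonempty))
    {h : ℕ} [Fintype (SUp s' x)] [Fintype (SDn s' x)]
    (mup : SUp s' x ≃ Fin h) (mdn : SDn s' x ≃ Fin h) :
    Pmat r' s' x (fun w => p w.1) mup -
        Vmat s' x (fun e => S e.1) mup mdn * star (Vmat s' x (fun e => S e.1) mup mdn) =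
      ∑ q : SUp s' x, Matrix.single (mup q) (mup q)
        (match q.1.1 with
         | Sum.inl _ => (0 : A)
         | Sum.inr w =>
            if {e | s e = w.1}.Finite then
              ∑ᶠ e ∈ {e | s e = w.1 ∧ r e ∈ H}, S e * star (S e)
            else
              p w.1 - ∑ᶠ e ∈ {e | s e = w.1 ∧ r e ∉ H}, S e * star (S e)) := by
  rw [Pmat_sub_Vmat_mul_star_Vmat r' s' x _ _
    (fun e f hef => hS_orth e.1 f.1 (Subtype.val_injective.ne hef))
    (fun e => (hCK1 e.1).trans (by rw [hr'])) mup mdn]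
  refine Finset.sum_congr rfl fun q _ => ?_
  rcases q with ⟨⟨e | w, i⟩, hq⟩
  · rfl
  refine congrArg _ ?_
  dsimp only
  rw [finsum_mem_source_subtype_eq s s' hs' w fun e => S e * star (S e)]
  split_ifs with hfin
  · have hne : {e | s e = w.1}.Nonempty := by
      have hi : 1 ≤ i ∧ i ≤ x w := hq
      rcases hvert w (by omega) with ⟨_, hne⟩ | ⟨hinf, _⟩
      exacts [hne, absurd hfin hinf]
    rw [hCK2 w.1 hfin hne, ← finsum_mem_inter_add_sdiff (r ⁻¹' H) hfin]
    exact add_sub_cancel_right _ _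
  · rfl
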